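/- The operators A_1(i) = (1/2)(I − |i⟩⟨i|), i = 1,2,3, form a POVM on ℂ³, and each A_1(i) as well as A_2(1) = (1/2)|φ⟩⟨φ| and A_2(2) = I − A_2(1) equals a sum of elements of the POVM G = {(1/2)|1⟩⟨1|, (1/2)|2⟩⟨2|, (1/2)|3⟩⟨3|, (1/2)|φ⟩⟨φ|, (1/2)(I−|φ⟩⟨φ|)} (i.e., A_1 and A_2 are coexistent, being contained in the range of G). -/

import Mathlib

open Matrix ComplexOrder

/-- The computational basis vector `|i⟩` of ℂ³. -/
def e (i : Fin 3) : Fin 3 → ℂ := fun j => if j = i then 1 else 0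

/-- The vector `|φ⟩ = (1/√3)(|1⟩ + |2⟩ + |3⟩)`. -/
noncomputable def φ : Fin 3 → ℂ := fun _ => 1 / (Real.sqrt 3 : ℂ)

/-- Rank-one projector `|v⟩⟨v|` as a matrix. -/
noncomputable def proj (v : Fin 3 → ℂ) : Matrix (Fin 3) (Fin 3) ℂ :=
  Matrix.vecMulVec v (star v)

/-- The five-outcome POVM of Reeb, Reitzner and Wolf. -/
noncomputable def Gop : Fin 5 → Matrix (Fin 3) (Fin 3) ℂ
  | 0 => (1 / 2 : ℂ) • proj (e 0)
  | 1 => (1 / 2 : ℂ) • proj (e 1)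
  | 2 => (1 / 2 : ℂ) • proj (e 2)
  | 3 => (1 / 2 : ℂ) • proj φ
  | 4 => (1 / 2 : ℂ) • ((1 : Matrix (Fin 3) (Fin 3) ℂ) - proj φ)

/-- The POVM `A₁(i) = (1/2)(I − |i⟩⟨i|)`. -/
noncomputable def A1 (i : Fin 3) : Matrix (Fin 3) (Fin 3) ℂ :=
  (1 / 2 : ℂ) • ((1 : Matrix (Fin 3) (Fin 3) ℂ) - proj (e i))

/-- The POVM `A₂ = {(1/2)|φ⟩⟨φ|, I − (1/2)|φ⟩⟨φ|}`. -/
noncomputable def A2 : Fin 2 → Matrix (Fin 3) (Fin 3) ℂ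
  | 0 => (1 / 2 : ℂ) • proj φ
  | 1 => 1 - (1 / 2 : ℂ) • proj φ

/-! Everything follows from the resolution of the identity `∑ i, |i⟩⟨i| = I`: it writes
`I − |i⟩⟨i|` as the sum of the two other basis projectors and `I − ½|φ⟩⟨φ|` as
`½ ∑ i, |i⟩⟨i| + ½ (I − |φ⟩⟨φ|)`. No property of `φ` is needed. -/

theorem sum_proj_e : ∑ i, proj (e i) = 1 := by
  ext a b
  simp [proj, e, vecMulVec_apply, Matrix.sum_apply, Matrix.one_apply]

theorem one_sub_proj_e (i : Fin 3) :
    1 - proj (e i) = ∑ j ∈ Finset.univ.erase i, proj (e j) := by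
  rw [← sum_proj_e, ← Finset.add_sum_erase _ _ (Finset.mem_univ i), add_sub_cancel_left]

theorem A1_eq_smul_sum (i : Fin 3) :
    A1 i = (1 / 2 : ℂ) • ∑ j ∈ Finset.univ.erase i, proj (e j) := by
  rw [A1, one_sub_proj_e]

theorem Gop_castLE (j : Fin 3) :
    Gop (Fin.castLE (by decide) j) = (1 / 2 : ℂ) • proj (e j) := by
  fin_cases j <;> rfl

theorem A1_posSemidef (i : Fin 3) : (A1 i).PosSemidef := by
  rw [A1_eq_smul_sum]
  refine PosSemidef.smul (posSemidef_sum _ fun j _ => posSemidef_vecMulVec_self_star _) ?_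
  norm_num [Complex.le_def]

theorem sum_A1 : ∑ i, A1 i = 1 := by
  simp only [A1, ← Finset.smul_sum, Finset.sum_sub_distrib, sum_proj_e, Finset.sum_const,
    Finset.card_univ, Fintype.card_fin]
  module

theorem A1_eq_sum_Gop (i : Fin 3) :
    A1 i = ∑ lam ∈ (Finset.univ.erase i).map (Fin.castLEEmb (by decide)), Gop lam := by
  rw [A1_eq_smul_sum, Finset.sum_map, Finset.smul_sum]
  simp only [Fin.coe_castLEEmb, Gop_castLE]

theorem A2_zero_eq : A2 0 = Gop 3 := rfl

theorem A2_one_eq : A2 1 = Gop 0 + Gop 1 + Gop 2 + Gop 4 := by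
  have hsum := sum_proj_e
  rw [Fin.sum_univ_three] at hsum
  simp only [A2, Gop]
  rw [← hsum]
  module

theorem stmt_14 :
    (∀ i, (A1 i).PosSemidef) ∧ (∑ i : Fin 3, A1 i = 1) ∧
    (∀ i, ∃ S : Finset (Fin 5), A1 i = ∑ lam ∈ S, Gop lam) ∧
    (∀ j, ∃ S : Finset (Fin 5), A2 j = ∑ lam ∈ S, Gop lam) := by
  refine ⟨A1_posSemidef, sum_A1, fun i => ⟨_, A1_eq_sum_Gop i⟩, fun j => ?_⟩
  fin_cases j
  · exact ⟨{3}, by simp [A2_zero_eq]⟩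
  · exact ⟨{0, 1, 2, 4}, by simp [A2_one_eq, Finset.sum_insert, add_assoc]⟩
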